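/- Let (A,B,P) be as in the context, with fundamental operators F_1, F_2 of (A,B,P) and G_1, G_2 of (A*,B*,P*). Then for every vector ξ in 𝒟_P one has P F_1 ξ = G_1* P ξ and P F_2 ξ = G_2* P ξ (both sides lie in 𝒟_{P*}). -/

import Mathlib

open ContinuousLinearMap

variable {H : Type*} [NormedAddCommGroup H] [InnerProductSpace ℂ H] [CompleteSpace H]

/-- The defect operator `D_P = (I - P*P)^{1/2}` of an operator `P`. -/
noncomputable def defectOp (P : H →L[ℂ] H) : H →L[ℂ] H :=
  CFC.sqrt (1 - adjoint P ∘L P)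

/-- The defect space `𝒟_P`, the closure of the range of `D_P`. -/
noncomputable def defectSp (P : H →L[ℂ] H) : Submodule ℂ H :=
  (LinearMap.range (defectOp P : H →ₗ[ℂ] H)).topologicalClosure

instance (P : H →L[ℂ] H) : CompleteSpace (defectSp P) :=
  (Submodule.isClosed_topologicalClosure _).completeSpace_coe

/-- `D_P h`, viewed as an element of the defect space `𝒟_P`. -/
noncomputable def toDef (P : H →L[ℂ] H) (h : H) : defectSp P :=
  ⟨defectOp P h,
    (LinearMap.range (defectOp P : H →ₗ[ℂ] H)).le_topologicalClosure
      (LinearMap.mem_range_self (defectOp P : H →ₗ[ℂ] H) h)⟩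

set_option synthInstance.maxHeartbeats 1000000
set_option maxHeartbeats 1000000


lemma one_sub_adj_self_nonneg (P : H →L[ℂ] H) (hP : ‖P‖ ≤ 1) :
    (0 : H →L[ℂ] H) ≤ 1 - adjoint P ∘L P := by
  rw [ContinuousLinearMap.nonneg_iff_isPositive, ContinuousLinearMap.isPositive_def']
  constructor
  · simp [IsSelfAdjoint, star_eq_adjoint, map_sub, adjoint_comp]
  · intro x
    have h1 : ‖P x‖ ≤ ‖x‖ := by
      calc ‖P x‖ ≤ ‖P‖ * ‖x‖ := P.le_opNorm x
      _ ≤ 1 * ‖x‖ := by gcongr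
      _ = ‖x‖ := one_mul _
    have hx : ((1 : H →L[ℂ] H) - adjoint P ∘L P) x = x - adjoint P (P x) := rfl
    rw [ContinuousLinearMap.reApplyInnerSelf, hx, inner_sub_left, map_sub,
      adjoint_inner_left]
    rw [inner_self_eq_norm_sq (𝕜 := ℂ), inner_self_eq_norm_sq (𝕜 := ℂ)]
    nlinarith [norm_nonneg (P x), norm_nonneg x]

noncomputable def ee : WithLp 2 (H × H) ≃L[ℂ] H × H := WithLp.prodContinuousLinearEquiv 2 ℂ H H

noncomputable def matT (P : H →L[ℂ] H) : WithLp 2 (H × H) →L[ℂ] WithLp 2 (H × H) :=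
  ((ee (H := H)).symm : (H × H) →L[ℂ] WithLp 2 (H × H)) ∘L
    ((P ∘L ContinuousLinearMap.snd ℂ H H).prod (adjoint P ∘L ContinuousLinearMap.fst ℂ H H)) ∘L
    ((ee (H := H)) : WithLp 2 (H × H) →L[ℂ] H × H)

example (P : H →L[ℂ] H) (x : WithLp 2 (H × H)) : (matT P x).ofLp.1 = P x.ofLp.2 := rfl
example (P : H →L[ℂ] H) (x : WithLp 2 (H × H)) : (matT P x).ofLp.2 = adjoint P x.ofLp.1 := rfl

lemma matT_sa (P : H →L[ℂ] H) : IsSelfAdjoint (matT P) := by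
  rw [ContinuousLinearMap.isSelfAdjoint_iff_isSymmetric]
  intro x y
  show (inner (𝕜 := ℂ) (matT P x) y) = inner ℂ x (matT P y)
  rw [WithLp.prod_inner_apply, WithLp.prod_inner_apply]
  have h1 : (matT P x).ofLp.1 = P x.ofLp.2 := rfl
  have h2 : (matT P x).ofLp.2 = adjoint P x.ofLp.1 := rfl
  have h3 : (matT P y).ofLp.1 = P y.ofLp.2 := rfl
  have h4 : (matT P y).ofLp.2 = adjoint P y.ofLp.1 := rfl
  rw [h1, h2, h3, h4, adjoint_inner_left, ← adjoint_inner_right (A := P)]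
  ring

lemma adjoint_norm_le (P : H →L[ℂ] H) (hP : ‖P‖ ≤ 1) : ‖adjoint P‖ ≤ 1 := by
  rw [show adjoint P = (ContinuousLinearMap.adjoint : (H →L[ℂ] H) ≃ₗᵢ⋆[ℂ] (H →L[ℂ] H)) P from rfl,
    LinearIsometryEquiv.norm_map]
  exact hP

lemma matT_norm_le (P : H →L[ℂ] H) (hP : ‖P‖ ≤ 1) : ‖matT P‖ ≤ 1 := by
  refine opNorm_le_bound _ zero_le_one fun x => ?_
  rw [one_mul]
  have hsq : ‖matT P x‖ ^ 2 ≤ ‖x‖ ^ 2 := by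
    rw [WithLp.prod_norm_sq_eq_of_L2, WithLp.prod_norm_sq_eq_of_L2]
    have h1 : ‖(matT P x).fst‖ = ‖P x.snd‖ := rfl
    have h2 : ‖(matT P x).snd‖ = ‖adjoint P x.fst‖ := rfl
    rw [h1, h2]
    have b1 : ‖P x.snd‖ ≤ ‖x.snd‖ :=
      (P.le_opNorm x.snd).trans (by nlinarith [norm_nonneg x.snd])
    have b2 : ‖adjoint P x.fst‖ ≤ ‖x.fst‖ :=
      ((adjoint P).le_opNorm x.fst).trans
        (by nlinarith [norm_nonneg x.fst, adjoint_norm_le P hP])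
    nlinarith [norm_nonneg (P x.snd), norm_nonneg (adjoint P x.fst), norm_nonneg x.fst, norm_nonneg x.snd]
  exact (pow_le_pow_iff_left₀ (norm_nonneg _) (norm_nonneg _) two_ne_zero).mp hsq



lemma defectOp_sq (P : H →L[ℂ] H) (hP : ‖P‖ ≤ 1) :
    defectOp P * defectOp P = 1 - adjoint P ∘L P :=
  CFC.sqrt_mul_sqrt_self _ (one_sub_adj_self_nonneg P hP)

lemma defectOp_isPositive (P : H →L[ℂ] H) : (defectOp P).IsPositive :=
  (ContinuousLinearMap.nonneg_iff_isPositive _).mp (CFC.sqrt_nonneg _)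

lemma matT_spectrum (P : H →L[ℂ] H) (hP : ‖P‖ ≤ 1) :
    spectrum ℝ (matT P) ⊆ Set.Icc (-1 : ℝ) 1 := by
  intro x hx
  have h1 : ‖x‖ ≤ ‖matT P‖ * ‖(1 : WithLp 2 (H × H) →L[ℂ] WithLp 2 (H × H))‖ :=
    spectrum.norm_le_norm_mul_of_mem hx
  have hone : ‖(1 : WithLp 2 (H × H) →L[ℂ] WithLp 2 (H × H))‖ ≤ 1 := by
    rw [ContinuousLinearMap.one_def]; exact ContinuousLinearMap.norm_id_le
  have h2 := matT_norm_le P hP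
  rw [Real.norm_eq_abs] at h1
  have h3 : |x| ≤ 1 := by nlinarith [abs_nonneg x, norm_nonneg (matT P)]
  have := abs_le.mp h3
  exact ⟨this.1, this.2⟩

noncomputable def matS (P : H →L[ℂ] H) : WithLp 2 (H × H) →L[ℂ] WithLp 2 (H × H) :=
  ((ee (H := H)).symm : (H × H) →L[ℂ] WithLp 2 (H × H)) ∘L
    ((defectOp (adjoint P) ∘L ContinuousLinearMap.fst ℂ H H).prod
      (defectOp P ∘L ContinuousLinearMap.snd ℂ H H)) ∘L
    ((ee (H := H)) : WithLp 2 (H × H) →L[ℂ] H × H)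

example (P : H →L[ℂ] H) (x : WithLp 2 (H × H)) : (matS P x).ofLp.1 = defectOp (adjoint P) x.ofLp.1 := rfl
example (P : H →L[ℂ] H) (x : WithLp 2 (H × H)) : (matS P x).ofLp.2 = defectOp P x.ofLp.2 := rfl

lemma matS_sq (P : H →L[ℂ] H) (hP : ‖P‖ ≤ 1) :
    matS P * matS P = 1 - matT P * matT P := by
  have hb : defectOp (adjoint P) * defectOp (adjoint P) = 1 - P ∘L adjoint P := by
    have := defectOp_sq (adjoint P) (adjoint_norm_le P hP)
    rwa [adjoint_adjoint] at this
  have ha : defectOp P * defectOp P = 1 - adjoint P ∘L P := defectOp_sq P hP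
  ext x
  refine WithLp.ofLp_injective 2 (Prod.ext ?_ ?_)
  · show defectOp (adjoint P) (defectOp (adjoint P) x.ofLp.1) = x.ofLp.1 - P (adjoint P x.ofLp.1)
    have := congrFun (congrArg DFunLike.coe hb) x.ofLp.1
    simpa using this
  · show defectOp P (defectOp P x.ofLp.2) = x.ofLp.2 - adjoint P (P x.ofLp.2)
    have := congrFun (congrArg DFunLike.coe ha) x.ofLp.2
    simpa using this

lemma matS_nonneg (P : H →L[ℂ] H) : (0 : WithLp 2 (H × H) →L[ℂ] _) ≤ matS P := by
  rw [ContinuousLinearMap.nonneg_iff_isPositive, ContinuousLinearMap.isPositive_def']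
  constructor
  · rw [ContinuousLinearMap.isSelfAdjoint_iff_isSymmetric]
    intro x y
    show (inner (𝕜 := ℂ) (matS P x) y) = inner ℂ x (matS P y)
    rw [WithLp.prod_inner_apply, WithLp.prod_inner_apply]
    have e1 : (matS P x).ofLp.1 = defectOp (adjoint P) x.ofLp.1 := rfl
    have e2 : (matS P x).ofLp.2 = defectOp P x.ofLp.2 := rfl
    have e3 : (matS P y).ofLp.1 = defectOp (adjoint P) y.ofLp.1 := rfl
    have e4 : (matS P y).ofLp.2 = defectOp P y.ofLp.2 := rfl
    have hD : ∀ (Q : H →L[ℂ] H) (u v : H), IsSelfAdjoint Q →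
        (inner (𝕜 := ℂ) (Q u) v) = inner ℂ u (Q v) := by
      intro Q u v hQ
      nth_rewrite 1 [← hQ.adjoint_eq]
      exact adjoint_inner_left Q v u
    rw [e1, e2, e3, e4,
      hD _ x.ofLp.1 y.ofLp.1 (defectOp_isPositive (adjoint P)).isSelfAdjoint,
      hD _ x.ofLp.2 y.ofLp.2 (defectOp_isPositive P).isSelfAdjoint]
  · intro x
    have e0 : (matS P).reApplyInnerSelf x
        = RCLike.re (inner (𝕜 := ℂ) (matS P x) x) := rfl
    rw [e0, WithLp.prod_inner_apply, map_add]
    have := (defectOp_isPositive (adjoint P)).re_inner_nonneg_left x.ofLp.1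
    have := (defectOp_isPositive P).re_inner_nonneg_left x.ofLp.2
    positivity

lemma intertwine (P : H →L[ℂ] H) (hP : ‖P‖ ≤ 1) (h : H) :
    P (defectOp P h) = defectOp (adjoint P) (P h) := by
  have hTsa : IsSelfAdjoint (matT P) := matT_sa P
  have hspec := matT_spectrum P hP
  set f : ℝ → ℝ := fun x => Real.sqrt (1 - x ^ 2) with hf
  have hS : CFC.sqrt (1 - matT P * matT P) = matS P :=
    CFC.sqrt_unique (matS_sq P hP) (matS_nonneg P)
  have hcc : cfc f (matT P) * cfc f (matT P) = 1 - matT P * matT P := by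
    rw [← cfc_mul f f (matT P)]
    have heq : Set.EqOn (fun x => f x * f x) (fun x : ℝ => 1 - x ^ 2)
        (spectrum ℝ (matT P)) := by
      intro x hx
      have hxi := hspec hx
      simp only [f]
      rw [Real.mul_self_sqrt (by nlinarith [hxi.1, hxi.2])]
    rw [cfc_congr heq]
    rw [show (fun x : ℝ => 1 - x ^ 2) = (fun x : ℝ => (fun _ : ℝ => (1:ℝ)) x - (fun y : ℝ => y ^ 2) x) from rfl,
      cfc_sub (fun _ : ℝ => (1:ℝ)) (fun y : ℝ => y ^ 2) (matT P),
      cfc_const_one ℝ (matT P), cfc_pow_id (matT P) 2, sq]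
  have hcnn : (0 : WithLp 2 (H × H) →L[ℂ] _) ≤ cfc f (matT P) :=
    cfc_nonneg fun x _ => Real.sqrt_nonneg _
  have hc : CFC.sqrt (1 - matT P * matT P) = cfc f (matT P) :=
    CFC.sqrt_unique hcc hcnn
  have hcomm : Commute (matT P) (matS P) := by
    have hco := cfc_commute_cfc (id : ℝ → ℝ) f (matT P)
    rwa [cfc_id ℝ (matT P), ← hc, hS] at hco
  have happ := congrFun (congrArg DFunLike.coe hcomm.eq)
    (((ee (H := H)).symm : (H × H) →L[ℂ] WithLp 2 (H × H)) (0, h))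
  have h1 := congrArg (fun z : WithLp 2 (H × H) => z.ofLp.1) happ
  have e1 : ((matT P * matS P) (((ee (H := H)).symm : (H × H) →L[ℂ] _) (0, h))).ofLp.1
      = P (defectOp P h) := by
    rfl
  have e2 : ((matS P * matT P) (((ee (H := H)).symm : (H × H) →L[ℂ] _) (0, h))).ofLp.1
      = defectOp (adjoint P) (P h) := rfl
  rw [← e1, ← e2]
  exact h1

lemma defectOp_inner_symm (P : H →L[ℂ] H) (u v : H) :
    inner (𝕜 := ℂ) (defectOp P u) v = inner ℂ u (defectOp P v) := by
  nth_rewrite 1 [← (defectOp_isPositive P).isSelfAdjoint.adjoint_eq]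
  exact adjoint_inner_left _ v u

lemma tetraKey (P : H →L[ℂ] H) (hP : ‖P‖ ≤ 1) (X Y : H →L[ℂ] H)
    (F : defectSp P →L[ℂ] defectSp P)
    (G : defectSp (adjoint P) →L[ℂ] defectSp (adjoint P))
    (hF : ∀ h : H, X h - adjoint Y (P h) = defectOp P (F (toDef P h) : H))
    (hG : ∀ h : H, adjoint X h - Y (adjoint P h)
      = defectOp (adjoint P) (G (toDef (adjoint P) h) : H))
    (hXP : X ∘L P = P ∘L X)
    (hPmap : ∀ x : H, x ∈ defectSp P → P x ∈ defectSp (adjoint P))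
    (ξ : defectSp P) :
    P (F ξ : H) = ((adjoint G ⟨P (ξ : H), hPmap _ ξ.2⟩ : defectSp (adjoint P)) : H) := by
  have hint : ∀ g : H, P (defectOp P g) = defectOp (adjoint P) (P g) := intertwine P hP
  have hint' : ∀ g : H, adjoint P (defectOp (adjoint P) g) = defectOp P (adjoint P g) := by
    intro g
    have := intertwine (adjoint P) (adjoint_norm_le P hP) g
    rwa [adjoint_adjoint] at this
  set PresL : defectSp P →L[ℂ] defectSp (adjoint P) :=
    ContinuousLinearMap.codRestrict (P ∘L (defectSp P).subtypeL) _
      (fun x => hPmap _ x.2) with hPresL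
  have hPres : (⟨P (ξ : H), hPmap _ ξ.2⟩ : defectSp (adjoint P)) = PresL ξ := rfl
  rw [hPres]
  rw [← sub_eq_zero]
  -- the vector lies in the defect space of P*
  have hmem : ∀ ζ : defectSp P,
      P (F ζ : H) - ((adjoint G (PresL ζ) : defectSp (adjoint P)) : H)
        ∈ defectSp (adjoint P) :=
    fun ζ => Submodule.sub_mem _ (hPmap _ (F ζ).2) (adjoint G (PresL ζ)).2
  -- orthogonality criterion
  have horth : ∀ w : H, w ∈ defectSp (adjoint P) →
      (∀ h : H, inner (𝕜 := ℂ) w (defectOp (adjoint P) h) = 0) → w = 0 := by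
    intro w hw h0
    have hker : defectSp (adjoint P) ≤ LinearMap.ker (innerSL ℂ w : H →ₗ[ℂ] ℂ) := by
      refine Submodule.topologicalClosure_minimal _ ?_ (ContinuousLinearMap.isClosed_ker _)
      rintro u ⟨h, rfl⟩
      exact h0 h
    have : inner (𝕜 := ℂ) w w = 0 := hker hw
    exact inner_self_eq_zero.mp this
  -- the continuous functional of ζ
  have main0 : ∀ (h : H) (ζ : defectSp P),
      inner (𝕜 := ℂ)
        (P ((defectSp P).subtypeL (F ζ))
          - (defectSp (adjoint P)).subtypeL (adjoint G (PresL ζ)))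
        (defectOp (adjoint P) h) = 0 := by
    intro h
    set φ : defectSp P → ℂ := fun ζ =>
      inner (𝕜 := ℂ)
        (P ((defectSp P).subtypeL (F ζ))
          - (defectSp (adjoint P)).subtypeL (adjoint G (PresL ζ)))
        (defectOp (adjoint P) h) with hφ
    show ∀ ζ, φ ζ = 0
    have hφc : Continuous φ := by
      apply Continuous.inner ?_ continuous_const
      exact (P.continuous.comp ((defectSp P).subtypeL.continuous.comp F.continuous)).sub
        ((defectSp (adjoint P)).subtypeL.continuous.comp
          ((adjoint G).continuous.comp PresL.continuous))
    -- vanishing on the dense range of toDef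
    have hker : ∀ g : H, φ (toDef P g) = 0 := by
      intro g
      rw [hφ]
      simp only [Submodule.subtypeL_apply]
      rw [inner_sub_left, sub_eq_zero]
      -- LHS
      have L1 : inner (𝕜 := ℂ) (P (F (toDef P g) : H)) (defectOp (adjoint P) h)
          = inner (𝕜 := ℂ) (P (X g - adjoint Y (P g)) : H) h := by
        rw [(adjoint_inner_right P _ _).symm, hint' h,
          ← defectOp_inner_symm P _ (adjoint P h), ← hF g, adjoint_inner_right]
      -- RHS
      have R1 : inner (𝕜 := ℂ)
            ((adjoint G (PresL (toDef P g)) : defectSp (adjoint P)) : H)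
            (defectOp (adjoint P) h)
          = inner (𝕜 := ℂ) (P g) (adjoint X h - Y (adjoint P h)) := by
        have e1 : defectOp (adjoint P) h = ((toDef (adjoint P) h : defectSp (adjoint P)) : H) :=
          rfl
        rw [e1, ← Submodule.coe_inner, adjoint_inner_left, Submodule.coe_inner]
        have e2 : ((PresL (toDef P g) : defectSp (adjoint P)) : H) = P (defectOp P g) := rfl
        rw [e2, hint g, defectOp_inner_symm, ← hG h]
      rw [L1, R1]
      rw [map_sub, inner_sub_left, inner_sub_right, adjoint_inner_right,
        ← adjoint_inner_left Y, adjoint_inner_right]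
      have e3 : X (P g) = P (X g) := by
        have := congrFun (congrArg DFunLike.coe hXP) g
        simpa using this
      rw [e3]
    -- density
    intro ζ
    have hcl : (ζ : H) ∈ closure ((LinearMap.range (defectOp P : H →ₗ[ℂ] H) : Submodule ℂ H) : Set H) := by
      have := ζ.2
      rw [← Submodule.topologicalClosure_coe]
      exact this
    obtain ⟨u, hu, hlim⟩ := mem_closure_iff_seq_limit.mp hcl
    choose g hg using hu
    have htd : Filter.Tendsto (fun n => toDef P (g n)) Filter.atTop (nhds ζ) := by
      rw [tendsto_subtype_rng]
      simpa only [toDef, ContinuousLinearMap.coe_coe, ← funext hg] using hlim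
    have h1 : Filter.Tendsto (fun n => φ (toDef P (g n))) Filter.atTop (nhds (φ ζ)) :=
      (hφc.tendsto ζ).comp htd
    have h2 : Filter.Tendsto (fun n => φ (toDef P (g n))) Filter.atTop (nhds 0) := by
      simpa only [hker] using tendsto_const_nhds
    exact tendsto_nhds_unique h1 h2
  exact horth _ (hmem ξ) fun h => main0 h ξ

/-- Lemma 2.4 (`tetralem4`): for every `ξ ∈ 𝒟_P`, `P F₁ ξ = G₁* P ξ` and `P F₂ ξ = G₂* P ξ`. -/
theorem statement1
    (A B P : H →L[ℂ] H)
    (hAB : A ∘L B = B ∘L A) (hAP : A ∘L P = P ∘L A) (hBP : B ∘L P = P ∘L B)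
    (hP : ‖P‖ ≤ 1)
    (F₁ F₂ : defectSp P →L[ℂ] defectSp P)
    (G₁ G₂ : defectSp (adjoint P) →L[ℂ] defectSp (adjoint P))
    (hF₁ : ∀ h : H, A h - adjoint B (P h) = defectOp P (F₁ (toDef P h) : H))
    (hF₂ : ∀ h : H, B h - adjoint A (P h) = defectOp P (F₂ (toDef P h) : H))
    (hG₁ : ∀ h : H, adjoint A h - B (adjoint P h)
      = defectOp (adjoint P) (G₁ (toDef (adjoint P) h) : H))
    (hG₂ : ∀ h : H, adjoint B h - A (adjoint P h)
      = defectOp (adjoint P) (G₂ (toDef (adjoint P) h) : H))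
    (hPmap : ∀ x : H, x ∈ defectSp P → P x ∈ defectSp (adjoint P)) :
    ∀ ξ : defectSp P,
      P (F₁ ξ : H) = ((adjoint G₁ ⟨P (ξ : H), hPmap _ ξ.2⟩ : defectSp (adjoint P)) : H) ∧
      P (F₂ ξ : H) = ((adjoint G₂ ⟨P (ξ : H), hPmap _ ξ.2⟩ : defectSp (adjoint P)) : H) := by
  intro ξ
  exact ⟨tetraKey P hP A B F₁ G₁ hF₁ hG₁ hAP hPmap ξ,
    tetraKey P hP B A F₂ G₂ hF₂ hG₂ hBP hPmap ξ⟩
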